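/- For every n ≥ 3, the braid-permutation group BPₙ is isomorphic to the group defined by the presentation with three generators σ₁, σ, ξ₁ and relations: σ₁σⁱσ₁σ⁻ⁱ = σⁱσ₁σ⁻ⁱσ₁ for 2 ≤ i ≤ n/2; σⁿ = (σσ₁)ⁿ⁻¹; ξ₁σⁱσ₁σ⁻ⁱ = σⁱσ₁σ⁻ⁱξ₁ for i = 2, …, n−2; ξ₁σⁱξ₁σ⁻ⁱ = σⁱξ₁σ⁻ⁱξ₁ for i = 2, …, n−2; ξ₁σξ₁σ⁻¹σ₁ = σσ₁σ⁻¹ξ₁σξ₁σ⁻¹; ξ₁σξ₁σ⁻¹ξ₁ = σξ₁σ⁻¹ξ₁σξ₁σ⁻¹; and ξ₁² = 1; an isomorphism is given by σ₁ ↦ σ₁, ξ₁ ↦ ξ₁, and σ ↦ σ₁σ₂⋯σₙ₋₁. -/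

import Mathlib

/-!
STATEMENT 7: For every n ≥ 3, the braid-permutation group BPₙ is isomorphic
to the group presented by three generators σ₁, σ, ξ₁ with relations
σ₁σⁱσ₁σ⁻ⁱ = σⁱσ₁σ⁻ⁱσ₁ (2 ≤ i ≤ n/2), σⁿ = (σσ₁)ⁿ⁻¹,
ξ₁σⁱσ₁σ⁻ⁱ = σⁱσ₁σ⁻ⁱξ₁ (i = 2, …, n−2), ξ₁σⁱξ₁σ⁻ⁱ = σⁱξ₁σ⁻ⁱξ₁
(i = 2, …, n−2), ξ₁σξ₁σ⁻¹σ₁ = σσ₁σ⁻¹ξ₁σξ₁σ⁻¹,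
ξ₁σξ₁σ⁻¹ξ₁ = σξ₁σ⁻¹ξ₁σξ₁σ⁻¹ and ξ₁² = 1, via σ₁ ↦ σ₁, ξ₁ ↦ ξ₁,
σ ↦ σ₁σ₂⋯σₙ₋₁.
-/

open FreeGroup

/-- Generators of the braid-permutation group `BPₙ`: `σ₁, …, σ_{n-1}` and
`ξ₁, …, ξ_{n-1}` (index `i : Fin (n-1)` stands for subscript `i+1`). -/
inductive BPGen (n : ℕ) : Type
  | sig (i : Fin (n - 1)) : BPGen n
  | xi (i : Fin (n - 1)) : BPGen n

open BPGen in
/-- The Fenn–Rimányi–Rourke relations of the braid-permutation group `BPₙ`. -/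
def bpRels (n : ℕ) : Set (FreeGroup (BPGen n)) :=
  {r | (∃ i j : Fin (n - 1), (i.val + 1 < j.val ∨ j.val + 1 < i.val) ∧
          r = of (sig i) * of (sig j) * (of (sig j) * of (sig i))⁻¹) ∨
       (∃ i j : Fin (n - 1), j.val = i.val + 1 ∧
          r = of (sig i) * of (sig j) * of (sig i) *
              (of (sig j) * of (sig i) * of (sig j))⁻¹) ∨
       (∃ i : Fin (n - 1), r = (of (xi i)) ^ 2) ∨
       (∃ i j : Fin (n - 1), (i.val + 1 < j.val ∨ j.val + 1 < i.val) ∧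
          r = of (xi i) * of (xi j) * (of (xi j) * of (xi i))⁻¹) ∨
       (∃ i j : Fin (n - 1), j.val = i.val + 1 ∧
          r = of (xi i) * of (xi j) * of (xi i) *
              (of (xi j) * of (xi i) * of (xi j))⁻¹) ∨
       (∃ i j : Fin (n - 1), (i.val + 1 < j.val ∨ j.val + 1 < i.val) ∧
          r = of (sig i) * of (xi j) * (of (xi j) * of (sig i))⁻¹) ∨
       (∃ i j : Fin (n - 1), j.val = i.val + 1 ∧
          r = of (xi i) * of (xi j) * of (sig i) *
              (of (sig j) * of (xi i) * of (xi j))⁻¹) ∨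
       (∃ i j : Fin (n - 1), j.val = i.val + 1 ∧
          r = of (sig i) * of (sig j) * of (xi i) *
              (of (xi j) * of (sig i) * of (sig j))⁻¹)}

/-- The braid-permutation group `BPₙ`. -/
def BraidPermGroup (n : ℕ) : Type := PresentedGroup (bpRels n)

noncomputable instance (n : ℕ) : Group (BraidPermGroup n) :=
  inferInstanceAs (Group (PresentedGroup (bpRels n)))

/-- The three generators σ₁, σ and ξ₁. -/
inductive ThreeGenBP : Type
  | s1 : ThreeGenBP
  | s : ThreeGenBP
  | x1 : ThreeGenBP

open ThreeGenBP in
/-- The relations of the three-generator presentation of `BPₙ`. -/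
def threeGenBPRels (n : ℕ) : Set (FreeGroup ThreeGenBP) :=
  {r | (∃ i : ℕ, 2 ≤ i ∧ 2 * i ≤ n ∧
          r = (of s1 * (of s) ^ i * of s1 * ((of s) ^ i)⁻¹) *
              ((of s) ^ i * of s1 * ((of s) ^ i)⁻¹ * of s1)⁻¹) ∨
       r = (of s) ^ n * (((of s) * of s1) ^ (n - 1))⁻¹ ∨
       (∃ i : ℕ, 2 ≤ i ∧ i ≤ n - 2 ∧
          r = (of x1 * (of s) ^ i * of s1 * ((of s) ^ i)⁻¹) *
              ((of s) ^ i * of s1 * ((of s) ^ i)⁻¹ * of x1)⁻¹) ∨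
       (∃ i : ℕ, 2 ≤ i ∧ i ≤ n - 2 ∧
          r = (of x1 * (of s) ^ i * of x1 * ((of s) ^ i)⁻¹) *
              ((of s) ^ i * of x1 * ((of s) ^ i)⁻¹ * of x1)⁻¹) ∨
       r = (of x1 * of s * of x1 * (of s)⁻¹ * of s1) *
           (of s * of s1 * (of s)⁻¹ * of x1 * of s * of x1 * (of s)⁻¹)⁻¹ ∨
       r = (of x1 * of s * of x1 * (of s)⁻¹ * of x1) *
           (of s * of x1 * (of s)⁻¹ * of x1 * of s * of x1 * (of s)⁻¹)⁻¹ ∨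
       r = (of x1) ^ 2}

/-!
Write `σ'ₖ = σᵏσ₁σ⁻ᵏ` and `ξ'ₖ = σᵏξ₁σ⁻ᵏ`. In any group `(σ₁σ)ᵐ = σ'₀σ'₁⋯σ'ₘ₋₁ σᵐ`, and
`σ(σ₁σ)ᵐ = (σσ₁)ᵐσ`, so the relation `σⁿ = (σσ₁)ⁿ⁻¹` says exactly that
`σ = σ'₀σ'₁⋯σ'ₙ₋₂`; it also makes `σ₁` commute with `σⁿ`, so that `σ'ₖ` is `n`-periodic.

In `BPₙ`, the braid and mixed relations together with far commutativity show that conjugation by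
`δ = σ₁σ₂⋯σₙ₋₁` shifts `σᵢ ↦ σᵢ₊₁` and `ξᵢ ↦ ξᵢ₊₁`; hence `σ₁, δ, ξ₁` satisfy the seven relations.
Conversely, periodicity extends the commutation relations from `i ≤ n/2` to `2 ≤ i ≤ n - 2`, and
reading `σσ'₀ = σ'₁σ` and `σξ'₀ = ξ'₁σ` through `σ = σ'₀σ'₁ ⋯` (where the factors from `σ'₂` on
commute with `σ'₀` and `ξ'₀`) gives the braid relation and `σ₁σ₂ξ₁ = ξ₂σ₁σ₂`; all other relations
of Fenn, Rimányi and Rourke are conjugates by powers of `σ` of the given ones. The homomorphisms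
`σ₁ ↦ σ₁, σ ↦ δ, ξ₁ ↦ ξ₁` and `σᵢ ↦ σ'ᵢ₋₁, ξᵢ ↦ ξ'ᵢ₋₁` are then inverse to each other on generators.
-/

@[simp] theorem PresentedGroup.mk_of {α : Type*} {rels : Set (FreeGroup α)} (x : α) :
    PresentedGroup.mk rels (FreeGroup.of x) = PresentedGroup.of x :=
  rfl

section ConjugatePowers

variable {G : Type*} [Group G]

theorem MulAut.conj_pow_conj_pow (t g : G) (j k : ℕ) :
    MulAut.conj (t ^ j) (MulAut.conj (t ^ k) g) = MulAut.conj (t ^ (j + k)) g := by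
  rw [pow_add, _root_.map_mul, MulAut.mul_apply]

theorem MulAut.conj_pow_add_of_commute {a t : G} {m : ℕ} (h : Commute a (t ^ m)) (k : ℕ) :
    MulAut.conj (t ^ (k + m)) a = MulAut.conj (t ^ k) a := by
  rw [← MulAut.conj_pow_conj_pow, MulAut.conj_apply (t ^ m), h.symm.mul_inv_cancel]

theorem commute_conj_iff_mul_eq_mul (a b c : G) :
    Commute a (MulAut.conj c b) ↔ a * c * b * c⁻¹ = c * b * c⁻¹ * a := by
  simp only [Commute, SemiconjBy, MulAut.conj_apply, mul_assoc]

theorem MulAut.conj_pow_eq_of_mul_eq_mul {t : G} {f : ℕ → G} {K : ℕ}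
    (h : ∀ i < K, t * f i = f (i + 1) * t) {k : ℕ} (hk : k ≤ K) :
    MulAut.conj (t ^ k) (f 0) = f k := by
  induction k with
  | zero => simp
  | succ k ih =>
    rw [pow_succ', _root_.map_mul, MulAut.mul_apply, ih (by omega), MulAut.conj_apply,
      h k (by omega), mul_inv_cancel_right]

theorem mul_pow_eq_prod_conj (a t : G) (m : ℕ) :
    (a * t) ^ m = ((List.range m).map fun k => MulAut.conj (t ^ k) a).prod * t ^ m := by
  induction m with
  | zero => simp
  | succ m ih =>
    rw [pow_succ, ih, List.prod_range_succ, MulAut.conj_apply]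
    group

theorem pow_succ_eq_mul_pow_iff_swap {a t : G} {m : ℕ} :
    t ^ (m + 1) = (t * a) ^ m ↔ t ^ (m + 1) = (a * t) ^ m := by
  have h : t * (a * t) ^ m = (t * a) ^ m * t := SemiconjBy.pow_right (mul_assoc t a t).symm m
  constructor
  · intro e
    apply mul_left_cancel (a := t)
    rw [h, ← e]
    exact (Commute.self_pow t _).eq
  · intro e
    apply mul_right_cancel (b := t)
    rw [← h, ← e]
    exact (Commute.self_pow t _).eq.symm

theorem commute_pow_of_pow_succ_eq_mul_pow {a t : G} {m : ℕ} (h : t ^ (m + 1) = (t * a) ^ m) :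
    Commute a (t ^ (m + 1)) :=
  calc a * t ^ (m + 1) = a * (t * a) ^ m := by rw [h]
    _ = (a * t) ^ m * a := SemiconjBy.pow_right (mul_assoc a t a).symm m
    _ = t ^ (m + 1) * a := by rw [← pow_succ_eq_mul_pow_iff_swap.mp h]

theorem pow_succ_eq_mul_pow_iff_eq_prod_conj {a t : G} {m : ℕ} :
    t ^ (m + 1) = (t * a) ^ m ↔ t = ((List.range m).map fun k => MulAut.conj (t ^ k) a).prod := by
  rw [pow_succ_eq_mul_pow_iff_swap, mul_pow_eq_prod_conj, pow_succ', mul_left_inj, eq_comm]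

theorem prod_range_mul_eq_mul_prod_range_iff (f : ℕ → G) {y y' : G} {i m : ℕ} (him : i + 2 ≤ m)
    (hlow : ∀ k < i, Commute y' (f k)) (hhigh : ∀ k, i + 2 ≤ k → k < m → Commute y (f k)) :
    ((List.range m).map f).prod * y = y' * ((List.range m).map f).prod ↔
      f i * f (i + 1) * y = y' * f i * f (i + 1) := by
  obtain ⟨r, rfl⟩ := Nat.exists_eq_add_of_le him
  rw [List.range_add, List.map_append, List.prod_append, List.prod_range_succ,
    List.prod_range_succ, List.map_map]
  set P := ((List.range i).map f).prod
  set M := ((List.range r).map (f ∘ (i + 2 + ·))).prod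
  have hP : Commute y' P := Commute.list_prod_right _ _ fun x hx => by
    obtain ⟨k, hk, rfl⟩ := List.mem_map.mp hx
    exact hlow k (List.mem_range.mp hk)
  have hM : Commute y M := Commute.list_prod_right _ _ fun x hx => by
    obtain ⟨k, hk, rfl⟩ := List.mem_map.mp hx
    exact hhigh (i + 2 + k) (by omega) (by have := List.mem_range.mp hk; omega)
  have hl : P * f i * f (i + 1) * M * y = P * (f i * f (i + 1) * y) * M := by
    simp only [mul_assoc, ← hM.eq]
  have hr : y' * (P * f i * f (i + 1) * M) = P * (y' * f i * f (i + 1)) * M := by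
    simp only [← mul_assoc, hP.eq]
  rw [hl, hr, mul_right_cancel_iff, mul_left_cancel_iff]

end ConjugatePowers

namespace BraidPermGroup

open BPGen PresentedGroup

/-- `σₖ₊₁` for `k < n - 1`, and the junk value `1` otherwise; `xiAt` likewise for `ξₖ₊₁`. -/
noncomputable def sigmaAt (n k : ℕ) : PresentedGroup (bpRels n) :=
  if h : k < n - 1 then .of (sig ⟨k, h⟩) else 1

noncomputable def xiAt (n k : ℕ) : PresentedGroup (bpRels n) :=
  if h : k < n - 1 then .of (xi ⟨k, h⟩) else 1

/-- `δ = σ₁σ₂⋯σₙ₋₁`, the image of `σ`. -/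
noncomputable def delta (n : ℕ) : PresentedGroup (bpRels n) :=
  ((List.range (n - 1)).map (sigmaAt n)).prod

variable {n : ℕ}

theorem sigmaAt_of_lt {k : ℕ} (h : k < n - 1) : sigmaAt n k = .of (sig ⟨k, h⟩) := dif_pos h

theorem xiAt_of_lt {k : ℕ} (h : k < n - 1) : xiAt n k = .of (xi ⟨k, h⟩) := dif_pos h

theorem commute_sigmaAt {i j : ℕ} (hij : i + 2 ≤ j) : Commute (sigmaAt n i) (sigmaAt n j) := by
  by_cases hj : j < n - 1
  · rw [sigmaAt_of_lt (by omega), sigmaAt_of_lt hj]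
    exact mk_eq_mk_of_mul_inv_mem
      (Or.inl ⟨⟨i, by omega⟩, ⟨j, hj⟩, Or.inl (by dsimp only; omega), rfl⟩)
  · simp [sigmaAt, hj]

theorem sigmaAt_braid {i : ℕ} (h : i + 1 < n - 1) :
    sigmaAt n i * sigmaAt n (i + 1) * sigmaAt n i =
      sigmaAt n (i + 1) * sigmaAt n i * sigmaAt n (i + 1) := by
  rw [sigmaAt_of_lt (by omega), sigmaAt_of_lt h]
  exact mk_eq_mk_of_mul_inv_mem (Or.inr <| Or.inl ⟨⟨i, by omega⟩, ⟨i + 1, h⟩, rfl, rfl⟩)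

theorem xiAt_mul_self (i : ℕ) : xiAt n i * xiAt n i = 1 := by
  by_cases hi : i < n - 1
  · have h := one_of_mem (rels := bpRels n) (Or.inr <| Or.inr <| Or.inl ⟨⟨i, hi⟩, rfl⟩)
    rw [_root_.map_pow, pow_two] at h
    rwa [xiAt_of_lt hi]
  · simp [xiAt, hi]

theorem commute_xiAt {i j : ℕ} (hij : i + 2 ≤ j) : Commute (xiAt n i) (xiAt n j) := by
  by_cases hj : j < n - 1
  · rw [xiAt_of_lt (by omega), xiAt_of_lt hj]
    exact mk_eq_mk_of_mul_inv_mem (Or.inr <| Or.inr <| Or.inr <| Or.inl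
      ⟨⟨i, by omega⟩, ⟨j, hj⟩, Or.inl (by dsimp only; omega), rfl⟩)
  · simp [xiAt, hj]

theorem xiAt_braid {i : ℕ} (h : i + 1 < n - 1) :
    xiAt n i * xiAt n (i + 1) * xiAt n i = xiAt n (i + 1) * xiAt n i * xiAt n (i + 1) := by
  rw [xiAt_of_lt (by omega), xiAt_of_lt h]
  exact mk_eq_mk_of_mul_inv_mem
    (Or.inr <| Or.inr <| Or.inr <| Or.inr <| Or.inl ⟨⟨i, by omega⟩, ⟨i + 1, h⟩, rfl, rfl⟩)

theorem commute_sigmaAt_xiAt {i j : ℕ} (hij : i + 2 ≤ j ∨ j + 2 ≤ i) :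
    Commute (sigmaAt n i) (xiAt n j) := by
  by_cases hi : i < n - 1
  · by_cases hj : j < n - 1
    · rw [sigmaAt_of_lt hi, xiAt_of_lt hj]
      exact mk_eq_mk_of_mul_inv_mem (Or.inr <| Or.inr <| Or.inr <| Or.inr <| Or.inr <| Or.inl
        ⟨⟨i, hi⟩, ⟨j, hj⟩, by dsimp only; omega, rfl⟩)
    · simp [xiAt, hj]
  · simp [sigmaAt, hi]

theorem xiAt_mul_xiAt_mul_sigmaAt {i : ℕ} (h : i + 1 < n - 1) :
    xiAt n i * xiAt n (i + 1) * sigmaAt n i = sigmaAt n (i + 1) * xiAt n i * xiAt n (i + 1) := by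
  rw [xiAt_of_lt (by omega), xiAt_of_lt h, sigmaAt_of_lt (by omega), sigmaAt_of_lt h]
  exact mk_eq_mk_of_mul_inv_mem (Or.inr <| Or.inr <| Or.inr <| Or.inr <| Or.inr <| Or.inr <|
    Or.inl ⟨⟨i, by omega⟩, ⟨i + 1, h⟩, rfl, rfl⟩)

theorem sigmaAt_mul_sigmaAt_mul_xiAt {i : ℕ} (h : i + 1 < n - 1) :
    sigmaAt n i * sigmaAt n (i + 1) * xiAt n i =
      xiAt n (i + 1) * sigmaAt n i * sigmaAt n (i + 1) := by
  rw [xiAt_of_lt (by omega), xiAt_of_lt h, sigmaAt_of_lt (by omega), sigmaAt_of_lt h]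
  exact mk_eq_mk_of_mul_inv_mem (Or.inr <| Or.inr <| Or.inr <| Or.inr <| Or.inr <| Or.inr <|
    Or.inr ⟨⟨i, by omega⟩, ⟨i + 1, h⟩, rfl, rfl⟩)

theorem delta_eq_prod_ofFn :
    delta n =
      (List.ofFn fun i : Fin (n - 1) => PresentedGroup.of (rels := bpRels n) (sig i)).prod := by
  rw [delta]
  congr 1
  refine List.ext_getElem (by simp) fun k h₁ h₂ => ?_
  rw [List.getElem_map, List.getElem_range, List.getElem_ofFn]
  exact sigmaAt_of_lt _

theorem delta_mul_sigmaAt {i : ℕ} (h : i + 2 ≤ n - 1) :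
    delta n * sigmaAt n i = sigmaAt n (i + 1) * delta n := by
  refine (prod_range_mul_eq_mul_prod_range_iff (sigmaAt n) h (fun k hk => ?_)
    fun k hk _ => ?_).mpr (sigmaAt_braid (by omega))
  · exact (commute_sigmaAt (by omega)).symm
  · exact commute_sigmaAt hk

theorem delta_mul_xiAt {i : ℕ} (h : i + 2 ≤ n - 1) :
    delta n * xiAt n i = xiAt n (i + 1) * delta n := by
  refine (prod_range_mul_eq_mul_prod_range_iff (sigmaAt n) h (fun k hk => ?_)
    fun k hk _ => ?_).mpr (sigmaAt_mul_sigmaAt_mul_xiAt (by omega))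
  · exact (commute_sigmaAt_xiAt (Or.inl (by omega))).symm
  · exact (commute_sigmaAt_xiAt (Or.inr hk)).symm

theorem conj_delta_pow_sigmaAt_zero {k : ℕ} (hk : k ≤ n - 2) :
    MulAut.conj (delta n ^ k) (sigmaAt n 0) = sigmaAt n k :=
  MulAut.conj_pow_eq_of_mul_eq_mul (fun i hi => delta_mul_sigmaAt (i := i) (by omega)) hk

theorem conj_delta_pow_xiAt_zero {k : ℕ} (hk : k ≤ n - 2) :
    MulAut.conj (delta n ^ k) (xiAt n 0) = xiAt n k :=
  MulAut.conj_pow_eq_of_mul_eq_mul (fun i hi => delta_mul_xiAt (i := i) (by omega)) hk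

theorem delta_pow (hn : 1 ≤ n) : delta n ^ n = (delta n * sigmaAt n 0) ^ (n - 1) := by
  obtain ⟨m, rfl⟩ := Nat.exists_eq_add_of_le' hn
  rw [Nat.add_sub_cancel, pow_succ_eq_mul_pow_iff_eq_prod_conj]
  conv_lhs => rw [delta, Nat.add_sub_cancel]
  refine congrArg List.prod (List.map_congr_left fun k hk => ?_)
  exact (conj_delta_pow_sigmaAt_zero (by simp at hk; omega)).symm

end BraidPermGroup

abbrev ThreeGenBPGroup (n : ℕ) : Type := PresentedGroup (threeGenBPRels n)

namespace ThreeGenBPGroup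

open ThreeGenBP PresentedGroup

local notation "σ" => (PresentedGroup.of s : ThreeGenBPGroup _)

/-- `σᵏσ₁σ⁻ᵏ`, the image of `σₖ₊₁`; `xiConj` likewise for `ξₖ₊₁`. -/
def sigmaConj (n k : ℕ) : ThreeGenBPGroup n := MulAut.conj (σ ^ k) (.of s1)

def xiConj (n k : ℕ) : ThreeGenBPGroup n := MulAut.conj (σ ^ k) (.of x1)

variable {n : ℕ}

theorem sigmaConj_zero : sigmaConj n 0 = .of s1 := by simp [sigmaConj]

theorem xiConj_zero : xiConj n 0 = .of x1 := by simp [xiConj]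

theorem conj_pow_sigmaConj (j k : ℕ) :
    MulAut.conj ((σ : ThreeGenBPGroup n) ^ j) (sigmaConj n k) = sigmaConj n (j + k) :=
  MulAut.conj_pow_conj_pow _ _ _ _

theorem conj_pow_xiConj (j k : ℕ) :
    MulAut.conj ((σ : ThreeGenBPGroup n) ^ j) (xiConj n k) = xiConj n (j + k) :=
  MulAut.conj_pow_conj_pow _ _ _ _

theorem commute_sigmaConj_zero_of_two_mul_le {i : ℕ} (h2 : 2 ≤ i) (hi : 2 * i ≤ n) :
    Commute (sigmaConj n 0) (sigmaConj n i) := by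
  have h := mk_eq_mk_of_mul_inv_mem (rels := threeGenBPRels n) (Or.inl ⟨i, h2, hi, rfl⟩)
  simp only [_root_.map_mul, _root_.map_pow, _root_.map_inv, mk_of] at h
  rw [sigmaConj_zero]
  exact (commute_conj_iff_mul_eq_mul _ _ _).mpr h

theorem sigma_pow : (σ : ThreeGenBPGroup n) ^ n = (σ * .of s1) ^ (n - 1) :=
  mk_eq_mk_of_mul_inv_mem (Or.inr (Or.inl rfl))

theorem commute_xiConj_zero_sigmaConj {i : ℕ} (h2 : 2 ≤ i) (hi : i + 2 ≤ n) :
    Commute (xiConj n 0) (sigmaConj n i) := by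
  have h := mk_eq_mk_of_mul_inv_mem (rels := threeGenBPRels n)
    (Or.inr <| Or.inr <| Or.inl ⟨i, h2, by omega, rfl⟩)
  simp only [_root_.map_mul, _root_.map_pow, _root_.map_inv, mk_of] at h
  rw [xiConj_zero]
  exact (commute_conj_iff_mul_eq_mul _ _ _).mpr h

theorem commute_xiConj_zero {i : ℕ} (h2 : 2 ≤ i) (hi : i + 2 ≤ n) :
    Commute (xiConj n 0) (xiConj n i) := by
  have h := mk_eq_mk_of_mul_inv_mem (rels := threeGenBPRels n)
    (Or.inr <| Or.inr <| Or.inr <| Or.inl ⟨i, h2, by omega, rfl⟩)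
  simp only [_root_.map_mul, _root_.map_pow, _root_.map_inv, mk_of] at h
  rw [xiConj_zero]
  exact (commute_conj_iff_mul_eq_mul _ _ _).mpr h

theorem xiConj_mul_xiConj_mul_sigmaConj_zero :
    xiConj n 0 * xiConj n 1 * sigmaConj n 0 = sigmaConj n 1 * xiConj n 0 * xiConj n 1 := by
  have h := mk_eq_mk_of_mul_inv_mem (rels := threeGenBPRels n)
    (Or.inr <| Or.inr <| Or.inr <| Or.inr <| Or.inl rfl)
  simp only [_root_.map_mul, _root_.map_inv, mk_of] at h
  simpa [sigmaConj, xiConj, MulAut.conj_apply, mul_assoc] using h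

theorem xiConj_braid_zero :
    xiConj n 0 * xiConj n 1 * xiConj n 0 = xiConj n 1 * xiConj n 0 * xiConj n 1 := by
  have h := mk_eq_mk_of_mul_inv_mem (rels := threeGenBPRels n)
    (Or.inr <| Or.inr <| Or.inr <| Or.inr <| Or.inr <| Or.inl rfl)
  simp only [_root_.map_mul, _root_.map_inv, mk_of] at h
  simpa [xiConj, MulAut.conj_apply, mul_assoc] using h

theorem xiConj_zero_sq : xiConj n 0 ^ 2 = 1 := by
  simpa [xiConj_zero] using one_of_mem (rels := threeGenBPRels n)
    (Or.inr <| Or.inr <| Or.inr <| Or.inr <| Or.inr <| Or.inr rfl)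

theorem sigma_eq_prod_sigmaConj (hn : 1 ≤ n) :
    σ = ((List.range (n - 1)).map (sigmaConj n)).prod := by
  obtain ⟨m, rfl⟩ := Nat.exists_eq_add_of_le' hn
  have h := sigma_pow (n := m + 1)
  rw [Nat.add_sub_cancel] at h ⊢
  exact pow_succ_eq_mul_pow_iff_eq_prod_conj.mp h

theorem sigmaConj_add_self (k : ℕ) : sigmaConj n (k + n) = sigmaConj n k := by
  cases n with
  | zero => rfl
  | succ m =>
    have h := sigma_pow (n := m + 1)
    rw [Nat.add_sub_cancel] at h
    exact MulAut.conj_pow_add_of_commute (commute_pow_of_pow_succ_eq_mul_pow h) k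

theorem commute_sigmaConj_zero {d : ℕ} (h2 : 2 ≤ d) (hd : d + 2 ≤ n) :
    Commute (sigmaConj n 0) (sigmaConj n d) := by
  rcases le_or_gt (2 * d) n with h | h
  · exact commute_sigmaConj_zero_of_two_mul_le h2 h
  · have h' := (commute_sigmaConj_zero_of_two_mul_le (n := n) (i := n - d) (by omega)
      (by omega)).map (MulAut.conj (σ ^ d))
    rwa [conj_pow_sigmaConj, conj_pow_sigmaConj, add_zero, show d + (n - d) = 0 + n by omega,
      sigmaConj_add_self, Commute.symm_iff] at h'

theorem commute_sigmaConj {j k : ℕ} (h : j + 2 ≤ k) (h' : k + 2 ≤ j + n) :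
    Commute (sigmaConj n j) (sigmaConj n k) := by
  obtain ⟨d, rfl⟩ := Nat.exists_eq_add_of_le (show j ≤ k by omega)
  simpa only [conj_pow_sigmaConj, add_zero] using
    (commute_sigmaConj_zero (n := n) (d := d) (by omega) (by omega)).map (MulAut.conj (σ ^ j))

theorem commute_xiConj_sigmaConj {j k : ℕ} (h : j + 2 ≤ k) (h' : k + 2 ≤ j + n) :
    Commute (xiConj n j) (sigmaConj n k) := by
  obtain ⟨d, rfl⟩ := Nat.exists_eq_add_of_le (show j ≤ k by omega)
  simpa only [conj_pow_xiConj, conj_pow_sigmaConj, add_zero] using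
    (commute_xiConj_zero_sigmaConj (n := n) (i := d) (by omega) (by omega)).map
      (MulAut.conj (σ ^ j))

theorem commute_sigmaConj_xiConj {j k : ℕ} (h : j + 2 ≤ k) (h' : k + 2 ≤ j + n) :
    Commute (sigmaConj n j) (xiConj n k) := by
  have h'' := (commute_xiConj_zero_sigmaConj (n := n) (i := j + n - k) (by omega)
    (by omega)).map (MulAut.conj (σ ^ k))
  rwa [conj_pow_xiConj, conj_pow_sigmaConj, add_zero, show k + (j + n - k) = j + n by omega,
    sigmaConj_add_self, Commute.symm_iff] at h''

theorem commute_xiConj {j k : ℕ} (h : j + 2 ≤ k) (h' : k + 2 ≤ j + n) :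
    Commute (xiConj n j) (xiConj n k) := by
  obtain ⟨d, rfl⟩ := Nat.exists_eq_add_of_le (show j ≤ k by omega)
  simpa only [conj_pow_xiConj, add_zero] using
    (commute_xiConj_zero (n := n) (i := d) (by omega) (by omega)).map (MulAut.conj (σ ^ j))

theorem sigmaConj_mul_sigmaConj_mul_eq_of_sigma_mul_eq (hn : 3 ≤ n) {y y' : ThreeGenBPGroup n}
    (hσ : σ * y = y' * σ) (hy : ∀ k, 2 ≤ k → k + 2 ≤ n → Commute y (sigmaConj n k)) :
    sigmaConj n 0 * sigmaConj n 1 * y = y' * sigmaConj n 0 * sigmaConj n 1 := by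
  refine (prod_range_mul_eq_mul_prod_range_iff (sigmaConj n) (i := 0) (m := n - 1) (by omega)
    (fun k hk => absurd hk k.not_lt_zero) fun k hk _ => hy k hk (by omega)).mp ?_
  rwa [← sigma_eq_prod_sigmaConj (by omega)]

theorem sigmaConj_braid (hn : 3 ≤ n) (k : ℕ) :
    sigmaConj n k * sigmaConj n (k + 1) * sigmaConj n k =
      sigmaConj n (k + 1) * sigmaConj n k * sigmaConj n (k + 1) := by
  have h := sigmaConj_mul_sigmaConj_mul_eq_of_sigma_mul_eq hn (y' := sigmaConj n 1)
    (by simp [sigmaConj, MulAut.conj_apply]) fun d hd hd' => commute_sigmaConj_zero hd hd'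
  simpa only [_root_.map_mul, conj_pow_sigmaConj, add_zero] using congrArg (MulAut.conj (σ ^ k)) h

theorem sigmaConj_mul_sigmaConj_mul_xiConj (hn : 3 ≤ n) (k : ℕ) :
    sigmaConj n k * sigmaConj n (k + 1) * xiConj n k =
      xiConj n (k + 1) * sigmaConj n k * sigmaConj n (k + 1) := by
  have h := sigmaConj_mul_sigmaConj_mul_eq_of_sigma_mul_eq hn (y := xiConj n 0) (y' := xiConj n 1)
    (by simp [xiConj, MulAut.conj_apply]) fun d hd hd' => commute_xiConj_zero_sigmaConj hd hd'
  simpa only [_root_.map_mul, conj_pow_sigmaConj, conj_pow_xiConj, add_zero] using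
    congrArg (MulAut.conj (σ ^ k)) h

theorem xiConj_mul_xiConj_mul_sigmaConj (k : ℕ) :
    xiConj n k * xiConj n (k + 1) * sigmaConj n k =
      sigmaConj n (k + 1) * xiConj n k * xiConj n (k + 1) := by
  simpa only [_root_.map_mul, conj_pow_sigmaConj, conj_pow_xiConj, add_zero] using
    congrArg (MulAut.conj (σ ^ k)) xiConj_mul_xiConj_mul_sigmaConj_zero

theorem xiConj_braid (k : ℕ) :
    xiConj n k * xiConj n (k + 1) * xiConj n k =
      xiConj n (k + 1) * xiConj n k * xiConj n (k + 1) := by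
  simpa only [_root_.map_mul, conj_pow_xiConj, add_zero] using
    congrArg (MulAut.conj (σ ^ k)) xiConj_braid_zero

theorem xiConj_mul_self (k : ℕ) : xiConj n k * xiConj n k = 1 := by
  simpa only [pow_two, _root_.map_mul, _root_.map_one, conj_pow_xiConj, add_zero] using
    congrArg (MulAut.conj (σ ^ k)) xiConj_zero_sq

end ThreeGenBPGroup

namespace BraidPermGroup

open ThreeGenBP ThreeGenBPGroup PresentedGroup

noncomputable def ofThreeGen (n : ℕ) : ThreeGenBP → PresentedGroup (bpRels n)
  | s1 => sigmaAt n 0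
  | s => delta n
  | x1 => xiAt n 0

variable {n : ℕ}

theorem lift_ofThreeGen_of_mem (hn : 3 ≤ n) :
    ∀ r ∈ threeGenBPRels n, FreeGroup.lift (ofThreeGen n) r = 1 := by
  have hσ : MulAut.conj (delta n) (sigmaAt n 0) = sigmaAt n 1 := by
    simpa using conj_delta_pow_sigmaAt_zero (n := n) (k := 1) (by omega)
  have hξ : MulAut.conj (delta n) (xiAt n 0) = xiAt n 1 := by
    simpa using conj_delta_pow_xiAt_zero (n := n) (k := 1) (by omega)
  rintro r (⟨i, h2, hi, rfl⟩ | rfl | ⟨i, h2, hi, rfl⟩ | ⟨i, h2, hi, rfl⟩ | rfl | rfl | rfl) <;>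
    simp only [_root_.map_mul, _root_.map_pow, _root_.map_inv, FreeGroup.lift_apply_of,
      ofThreeGen, mul_inv_eq_one]
  · rw [← commute_conj_iff_mul_eq_mul, conj_delta_pow_sigmaAt_zero (by omega)]
    exact commute_sigmaAt h2
  · exact delta_pow (by omega)
  · rw [← commute_conj_iff_mul_eq_mul, conj_delta_pow_sigmaAt_zero (by omega)]
    exact (commute_sigmaAt_xiAt (Or.inr h2)).symm
  · rw [← commute_conj_iff_mul_eq_mul, conj_delta_pow_xiAt_zero (by omega)]
    exact commute_xiAt h2
  · have h := xiAt_mul_xiAt_mul_sigmaAt (n := n) (i := 0) (by omega)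
    rw [← hσ, ← hξ] at h
    simpa [MulAut.conj_apply, mul_assoc] using h
  · have h := xiAt_braid (n := n) (i := 0) (by omega)
    rw [← hξ] at h
    simpa [MulAut.conj_apply, mul_assoc] using h
  · rw [pow_two]
    exact xiAt_mul_self 0

variable (n) in
noncomputable def ofThreeGenBPGroup (hn : 3 ≤ n) : ThreeGenBPGroup n →* PresentedGroup (bpRels n) :=
  toGroup (lift_ofThreeGen_of_mem hn)

theorem ofThreeGenBPGroup_sigmaConj (hn : 3 ≤ n) {k : ℕ} (hk : k ≤ n - 2) :
    ofThreeGenBPGroup n hn (sigmaConj n k) = sigmaAt n k := by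
  rw [sigmaConj, MulAut.conj_apply, _root_.map_mul, _root_.map_mul, _root_.map_inv,
    _root_.map_pow, ofThreeGenBPGroup, toGroup.of, toGroup.of, ← MulAut.conj_apply]
  exact conj_delta_pow_sigmaAt_zero hk

theorem ofThreeGenBPGroup_xiConj (hn : 3 ≤ n) {k : ℕ} (hk : k ≤ n - 2) :
    ofThreeGenBPGroup n hn (xiConj n k) = xiAt n k := by
  rw [xiConj, MulAut.conj_apply, _root_.map_mul, _root_.map_mul, _root_.map_inv,
    _root_.map_pow, ofThreeGenBPGroup, toGroup.of, toGroup.of, ← MulAut.conj_apply]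
  exact conj_delta_pow_xiAt_zero hk

end BraidPermGroup

namespace ThreeGenBPGroup

open BPGen BraidPermGroup PresentedGroup

def ofBPGen (n : ℕ) : BPGen n → ThreeGenBPGroup n
  | sig i => sigmaConj n i
  | xi i => xiConj n i

variable {n : ℕ}

theorem lift_ofBPGen_of_mem (hn : 3 ≤ n) : ∀ r ∈ bpRels n, FreeGroup.lift (ofBPGen n) r = 1 := by
  rintro r (⟨i, j, hij, rfl⟩ | ⟨i, j, hij, rfl⟩ | ⟨i, rfl⟩ | ⟨i, j, hij, rfl⟩ | ⟨i, j, hij, rfl⟩ |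
      ⟨i, j, hij, rfl⟩ | ⟨i, j, hij, rfl⟩ | ⟨i, j, hij, rfl⟩) <;>
    simp only [_root_.map_mul, _root_.map_inv, FreeGroup.lift_apply_of, ofBPGen,
      mul_inv_eq_one, pow_two]
  · have := i.isLt; have := j.isLt
    rcases hij with h | h
    · exact commute_sigmaConj (by omega) (by omega)
    · exact (commute_sigmaConj (by omega) (by omega)).symm
  · rw [hij]
    exact sigmaConj_braid hn _
  · exact xiConj_mul_self _
  · have := i.isLt; have := j.isLt
    rcases hij with h | h
    · exact commute_xiConj (by omega) (by omega)
    · exact (commute_xiConj (by omega) (by omega)).symm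
  · rw [hij]
    exact xiConj_braid _
  · have := i.isLt; have := j.isLt
    rcases hij with h | h
    · exact commute_sigmaConj_xiConj (by omega) (by omega)
    · exact (commute_xiConj_sigmaConj (by omega) (by omega)).symm
  · rw [hij]
    exact xiConj_mul_xiConj_mul_sigmaConj _
  · rw [hij]
    exact sigmaConj_mul_sigmaConj_mul_xiConj hn _

variable (n) in
noncomputable def ofBraidPermGroup (hn : 3 ≤ n) : PresentedGroup (bpRels n) →* ThreeGenBPGroup n :=
  toGroup (lift_ofBPGen_of_mem hn)

theorem ofBraidPermGroup_sigmaAt (hn : 3 ≤ n) {k : ℕ} (hk : k < n - 1) :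
    ofBraidPermGroup n hn (sigmaAt n k) = sigmaConj n k := by
  rw [sigmaAt_of_lt hk]
  exact toGroup.of _

theorem ofBraidPermGroup_xiAt (hn : 3 ≤ n) {k : ℕ} (hk : k < n - 1) :
    ofBraidPermGroup n hn (xiAt n k) = xiConj n k := by
  rw [xiAt_of_lt hk]
  exact toGroup.of _

theorem ofBraidPermGroup_delta (hn : 3 ≤ n) :
    ofBraidPermGroup n hn (delta n) = .of ThreeGenBP.s := by
  rw [delta, map_list_prod, List.map_map, sigma_eq_prod_sigmaConj (by omega)]
  exact congrArg List.prod (List.map_congr_left fun k hk =>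
    ofBraidPermGroup_sigmaAt hn (List.mem_range.mp hk))

theorem ofThreeGenBPGroup_comp_ofBraidPermGroup (hn : 3 ≤ n) :
    (ofThreeGenBPGroup n hn).comp (ofBraidPermGroup n hn) = MonoidHom.id _ := by
  refine PresentedGroup.ext fun g => ?_
  rcases g with i | i <;> have := i.isLt
  · rw [MonoidHom.comp_apply, ← sigmaAt_of_lt i.isLt, ofBraidPermGroup_sigmaAt hn i.isLt]
    exact ofThreeGenBPGroup_sigmaConj hn (by omega)
  · rw [MonoidHom.comp_apply, ← xiAt_of_lt i.isLt, ofBraidPermGroup_xiAt hn i.isLt]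
    exact ofThreeGenBPGroup_xiConj hn (by omega)

theorem ofBraidPermGroup_comp_ofThreeGenBPGroup (hn : 3 ≤ n) :
    (ofBraidPermGroup n hn).comp (ofThreeGenBPGroup n hn) = MonoidHom.id _ := by
  refine PresentedGroup.ext fun g => ?_
  rcases g with _ | _ | _ <;> rw [MonoidHom.comp_apply, ofThreeGenBPGroup, toGroup.of]
  · exact (ofBraidPermGroup_sigmaAt hn (by omega)).trans sigmaConj_zero
  · exact ofBraidPermGroup_delta hn
  · exact (ofBraidPermGroup_xiAt hn (by omega)).trans xiConj_zero

variable (n) in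
noncomputable def equivBraidPermGroup (hn : 3 ≤ n) :
    ThreeGenBPGroup n ≃* BraidPermGroup n :=
  (ofThreeGenBPGroup n hn).toMulEquiv (ofBraidPermGroup n hn)
    (ofBraidPermGroup_comp_ofThreeGenBPGroup hn) (ofThreeGenBPGroup_comp_ofBraidPermGroup hn)

theorem equivBraidPermGroup_of (hn : 3 ≤ n) (x : ThreeGenBP) :
    equivBraidPermGroup n hn (.of x) = ofThreeGen n x :=
  toGroup.of (lift_ofThreeGen_of_mem hn)

end ThreeGenBPGroup

theorem braid_permutation_three_generator_presentation (n : ℕ) (hn : 3 ≤ n) :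
    ∃ e : PresentedGroup (threeGenBPRels n) ≃* BraidPermGroup n,
      e (PresentedGroup.of ThreeGenBP.s1) =
        PresentedGroup.of (BPGen.sig ⟨0, by omega⟩) ∧
      e (PresentedGroup.of ThreeGenBP.x1) =
        PresentedGroup.of (BPGen.xi ⟨0, by omega⟩) ∧
      e (PresentedGroup.of ThreeGenBP.s) =
        (List.ofFn (fun i : Fin (n - 1) =>
          PresentedGroup.of (rels := bpRels n) (BPGen.sig i))).prod := by
  refine ⟨ThreeGenBPGroup.equivBraidPermGroup n hn, ?_, ?_, ?_⟩ <;>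
    rw [ThreeGenBPGroup.equivBraidPermGroup_of, BraidPermGroup.ofThreeGen]
  · exact BraidPermGroup.sigmaAt_of_lt _
  · exact BraidPermGroup.xiAt_of_lt _
  · exact BraidPermGroup.delta_eq_prod_ofFn
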